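/- arXiv:1306.0771 — 2 statements merged into one kernel-verified Lean document; each statement's English description precedes it below -/
import Mathlib

section
/- The relative interval of Nai versus Maj is [−1/4, 1/4]; in particular, for the sequence I_n consisting of ⌈n/2⌉ copies of a_0 followed by ⌊n/2⌋ distinct items, Maj(I_n) − Nai(I_n) = ⌈n/2⌉ − ⌊n/2⌋/n − ⌈n/2⌉²/n, which is asymptotically n/4. -/
open scoped BigOperators

noncomputable section

/-- frequency of item `a` in sequence `I` -/
def freq (I : List ℕ) (a : ℕ) : ℝ := (I.count a : ℝ) / (I.length : ℝ)

/-- profit (aggregate frequency) of buffer sequence `S` against input `I` -/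
def profit (I S : List ℕ) : ℝ := (S.map (freq I)).sum

/-- Naive algorithm: buffers every arriving item. -/
def naiP (I : List ℕ) : ℝ := profit I I

/-- Buffers of the eager algorithm: buffer each arriving item until the first
repeated item (two equal consecutive items), then keep it forever. -/
def eagRun : List ℕ → List ℕ
  | [] => []
  | [x] => [x]
  | x :: y :: rest =>
      if x = y then x :: List.replicate (rest.length + 1) x
      else x :: eagRun (y :: rest)

def eagP (I : List ℕ) : ℝ := profit I (eagRun I)

/-- One step of the Majority algorithm on state (buffer, counter). -/
def majStep (s : ℕ × ℕ) (a : ℕ) : ℕ × ℕ :=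
  if s.2 = 0 then (a, 1)
  else if a = s.1 then (s.1, s.2 + 1)
  else (s.1, s.2 - 1)

def majBuffers (I : List ℕ) : List ℕ :=
  ((List.scanl majStep ((0 : ℕ), (0 : ℕ)) I).tail).map Prod.fst

def majP (I : List ℕ) : ℝ := profit I (majBuffers I)

/-- A valid offline buffer schedule: at each step the buffer holds either the
currently arriving item or the previously buffered item (the first buffered
item must be the first arriving item). -/
def ValidSched (I S : List ℕ) : Prop :=
  S.length = I.length ∧
    ∀ i, i < S.length →
      S.getD i 0 = I.getD i 0 ∨ (0 < i ∧ S.getD i 0 = S.getD (i - 1) 0)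

/-- Optimal offline profit. -/
def optP (I : List ℕ) : ℝ := sSup {x | ∃ S, ValidSched I S ∧ x = profit I S}

/-- Worst-permutation value of an algorithm's profit. -/
def worstP (f : List ℕ → ℝ) (I : List ℕ) : ℝ := sInf {x | ∃ J, J.Perm I ∧ x = f J}

/-- E_n = a,a,b,b,...,b with n-2 copies of b. -/
def Eseq (n a b : ℕ) : List ℕ := a :: a :: List.replicate (n - 2) b

/-- W_n = a_1,a_0,a_2,a_0,... with item 0 playing the role of a_0. -/
def Wseq (n : ℕ) : List ℕ :=
  ((List.range (n / 2)).flatMap fun i => [i + 1, 0]) ++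
    (if n % 2 = 1 then [n / 2 + 1] else [])

/-- W'_n = a_1,...,a_⌈n/2⌉,a_0,...,a_0 with ⌊n/2⌋ copies of a_0 = 0. -/
def Wseq' (n : ℕ) : List ℕ :=
  ((List.range ((n + 1) / 2)).map (· + 1)) ++ List.replicate (n / 2) 0

/-- I_n = ⌈n/2⌉ copies of a_0 = 0 followed by ⌊n/2⌋ distinct items. -/
def Iseq (n : ℕ) : List ℕ :=
  List.replicate ((n + 1) / 2) 0 ++ (List.range (n / 2)).map (· + 1)

/-- D(I): the items of `I` listed in nondecreasing order of frequency. -/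
def Dsort (I : List ℕ) : List ℕ :=
  List.insertionSort (fun x y => I.count x ≤ I.count y) I

/-- The interleaving permutation a'_1, a'_n, a'_2, a'_{n-1}, ... of a list. -/
def interleave : List ℕ → List ℕ
  | [] => []
  | x :: xs => x :: interleave xs.reverse
termination_by l => l.length
decreasing_by set_option linter.unnecessarySimpa false in simpa using Nat.lt_succ_self xs.length

/-- max over sequences of length n of f(I) - g(I). -/
def maxDiff (f g : List ℕ → ℝ) (n : ℕ) : ℝ :=
  sSup {d | ∃ I : List ℕ, I.length = n ∧ d = f I - g I}

/-- min over sequences of length n of f(I) - g(I). -/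
def minDiff (f g : List ℕ → ℝ) (n : ℕ) : ℝ :=
  sInf {d | ∃ I : List ℕ, I.length = n ∧ d = f I - g I}

/-- A deterministic online algorithm for the single-buffer frequent items
problem: the buffer after each nonempty prefix is either the arriving item or
the previous buffer content. -/
structure OnlineAlg where
  buf : List ℕ → ℕ
  first : ∀ x, buf [x] = x
  step : ∀ l x, l ≠ [] → buf (l ++ [x]) = x ∨ buf (l ++ [x]) = buf l

/-- Profit of an online algorithm on input `I`. -/
def oprofit (A : OnlineAlg) (I : List ℕ) : ℝ :=
  ∑ t ∈ Finset.range I.length, freq I (A.buf (I.take (t + 1)))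

end


/-!
Write `f` for the frequency function of `I`, `A` for a most frequent item, `c` for its number of
occurrences and `n = |I|`. Then `Nai(I) - Maj(I) = ∑ₜ (f aₜ - f bₜ)` with `bₜ` Maj's buffer,
and each term lies in `[-c/n, c/n]` and vanishes unless `bₜ ≠ aₜ`. A mismatch occurs exactly on a
counter decrement, which cancels the arriving item against a different buffered one; with the
potential "counter of a buffered item other than `A`", at most `n - c` steps mismatch. Hence
`|Nai(I) - Maj(I)| ≤ c (n - c) / n ≤ n / 4`. Conversely, on `W_n` Maj buffers the singletons
`aᵢ` and never `a₀`, and on `I_n` it buffers `a₀` throughout, so `Nai - Maj` is within `1` of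
`n / 4` on `W_n` and of `-n / 4` on `I_n`.
-/

open Filter Topology

def mismatchCount {α : Type*} [DecidableEq α] (J B : List α) : ℕ :=
  (J.zip B).countP fun p => p.1 ≠ p.2

theorem mismatchCount_cons {α : Type*} [DecidableEq α] (x y : α) (J B : List α) :
    mismatchCount (x :: J) (y :: B) = mismatchCount J B + if x = y then 0 else 1 := by
  by_cases h : x = y <;> simp [mismatchCount, h]

theorem abs_sum_map_sub_sum_map_le {α : Type*} [DecidableEq α] (f : α → ℝ) (M : ℝ)
    (hf : ∀ x y, |f x - f y| ≤ M) :
    ∀ (J B : List α), J.length = B.length →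
      |(J.map f).sum - (B.map f).sum| ≤ M * mismatchCount J B
  | [], [], _ => by simp [mismatchCount]
  | x :: J, y :: B, h => by
    have ih := abs_sum_map_sub_sum_map_le f M hf J B (by simpa using h)
    have hxy : |f x - f y| ≤ M * (if x = y then 0 else 1) := by
      split_ifs with hne
      · simp [hne]
      · simpa using hf x y
    calc |((x :: J).map f).sum - ((y :: B).map f).sum|
        = |((J.map f).sum - (B.map f).sum) + (f x - f y)| := by
          simp only [List.map_cons, List.sum_cons]; ring_nf
      _ ≤ |(J.map f).sum - (B.map f).sum| + |f x - f y| := abs_add_le _ _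
      _ ≤ M * mismatchCount J B + M * (if x = y then 0 else 1) := add_le_add ih hxy
      _ = M * mismatchCount (x :: J) (y :: B) := by
        rw [mismatchCount_cons]; push_cast; ring

theorem countP_ne_add_count {α : Type*} [DecidableEq α] (A : α) (I : List α) :
    I.countP (· ≠ A) + I.count A = I.length := by
  induction I with
  | nil => rfl
  | cons a I ih => by_cases h : a = A <;> simp [h] at ih ⊢ <;> omega

theorem exists_forall_count_le {α : Type*} [DecidableEq α] [Inhabited α] (I : List α) :
    ∃ A, ∀ x, I.count x ≤ I.count A := by
  obtain ⟨A, -, hA⟩ := (insert default I.toFinset).exists_max_image I.count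
    (Finset.insert_nonempty _ _)
  refine ⟨A, fun x => ?_⟩
  by_cases hx : x ∈ I
  · exact hA x (Finset.mem_insert_of_mem (List.mem_toFinset.2 hx))
  · simp [List.count_eq_zero_of_not_mem hx]

theorem freq_nonneg (I : List ℕ) (a : ℕ) : 0 ≤ freq I a := by
  unfold freq; positivity

theorem freq_le_freq_of_count_le (I : List ℕ) {a b : ℕ} (h : I.count a ≤ I.count b) :
    freq I a ≤ freq I b := by
  unfold freq; gcongr

theorem freq_eq_of_perm {I J : List ℕ} (h : I.Perm J) : freq I = freq J := by
  ext a; rw [freq, freq, h.count_eq, h.length_eq]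

theorem naiP_eq_of_perm {I J : List ℕ} (h : I.Perm J) : naiP I = naiP J := by
  rw [naiP, naiP, profit, profit, freq_eq_of_perm h, (h.map _).sum_eq]

theorem profit_of_forall_freq_eq (I S : List ℕ) (c : ℝ) (h : ∀ x ∈ S, freq I x = c) :
    profit I S = S.length * c := by
  rw [profit, List.map_congr_left h]
  simp

def majRun (s : ℕ × ℕ) : List ℕ → List ℕ
  | [] => []
  | a :: J => (majStep s a).1 :: majRun (majStep s a) J

theorem cons_majRun_eq_map_scanl (s : ℕ × ℕ) (J : List ℕ) :
    s.1 :: majRun s J = (List.scanl majStep s J).map Prod.fst := by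
  induction J generalizing s with
  | nil => rfl
  | cons a J ih => simp [majRun, ih]

theorem majBuffers_eq_majRun (I : List ℕ) : majBuffers I = majRun (0, 0) I := by
  rw [majBuffers, List.map_tail, ← cons_majRun_eq_map_scanl, List.tail_cons]

@[simp]
theorem length_majRun (s : ℕ × ℕ) (J : List ℕ) : (majRun s J).length = J.length := by
  induction J generalizing s <;> simp [majRun, *]

theorem majStep_self (a j : ℕ) : majStep (a, j) a = (a, j + 1) := by
  unfold majStep; split_ifs <;> simp_all

def majPotential (A : ℕ) (s : ℕ × ℕ) : ℕ := if s.1 = A then 0 else s.2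

theorem mismatch_add_majPotential_majStep_le (A a : ℕ) (s : ℕ × ℕ) :
    (if a = (majStep s a).1 then 0 else 1) + majPotential A (majStep s a)
      ≤ (if a = A then 0 else 1) + majPotential A s := by
  obtain ⟨b, k⟩ := s
  unfold majPotential majStep
  split_ifs <;> simp_all
  omega

theorem mismatchCount_majRun_le (A : ℕ) (J : List ℕ) (s : ℕ × ℕ) :
    mismatchCount J (majRun s J) ≤ J.countP (· ≠ A) + majPotential A s := by
  induction J generalizing s with
  | nil => simp [mismatchCount, majRun]
  | cons a J ih =>
    have hstep := mismatch_add_majPotential_majStep_le A a s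
    have ih' := ih (majStep s a)
    have hcount : (a :: J).countP (· ≠ A) = J.countP (· ≠ A) + if a = A then 0 else 1 := by
      by_cases h : a = A <;> simp [h]
    rw [majRun, mismatchCount_cons, hcount]
    split_ifs at hstep ⊢ <;> omega

theorem abs_naiP_sub_majP_le (I : List ℕ) : |naiP I - majP I| ≤ I.length / 4 := by
  obtain ⟨A, hA⟩ := exists_forall_count_le I
  have hfreq : ∀ x y, |freq I x - freq I y| ≤ freq I A := fun x y =>
    abs_sub_le_of_nonneg_of_le (freq_nonneg I x) (freq_le_freq_of_count_le I (hA x))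
      (freq_nonneg I y) (freq_le_freq_of_count_le I (hA y))
  have hmis : mismatchCount I (majBuffers I) + I.count A ≤ I.length := by
    have := mismatchCount_majRun_le A I (0, 0)
    have := countP_ne_add_count A I
    rw [majBuffers_eq_majRun]
    simp only [majPotential, ite_self, add_zero] at *
    omega
  have hn : (0 : ℝ) ≤ I.length := by positivity
  calc |naiP I - majP I|
      ≤ freq I A * mismatchCount I (majBuffers I) :=
        abs_sum_map_sub_sum_map_le _ _ hfreq I _ (by simp [majBuffers_eq_majRun])
    _ ≤ I.count A / I.length * (I.length - I.count A) := by
        rw [freq]; gcongr; rw [le_sub_iff_add_le]; exact_mod_cast hmis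
    _ ≤ I.length / 4 := by
        rcases hn.eq_or_lt with h0 | hpos
        · simp [← h0]
        rw [div_mul_eq_mul_div, div_le_div_iff₀ hpos (by norm_num)]
        nlinarith [sq_nonneg ((I.length : ℝ) - 2 * I.count A)]

theorem maxDiff_naiP_majP_le (n : ℕ) : maxDiff naiP majP n ≤ n / 4 := by
  refine csSup_le ⟨_, List.replicate n 0, by simp, rfl⟩ ?_
  rintro _ ⟨I, rfl, rfl⟩
  exact (le_abs_self _).trans (abs_naiP_sub_majP_le I)

theorem neg_le_minDiff_naiP_majP (n : ℕ) : -(n / 4 : ℝ) ≤ minDiff naiP majP n := by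
  refine le_csInf ⟨_, List.replicate n 0, by simp, rfl⟩ ?_
  rintro _ ⟨I, rfl, rfl⟩
  exact neg_le_of_abs_le (abs_naiP_sub_majP_le I)

theorem le_maxDiff_naiP_majP (I : List ℕ) : naiP I - majP I ≤ maxDiff naiP majP I.length := by
  refine le_csSup ⟨I.length / 4, ?_⟩ ⟨I, rfl, rfl⟩
  rintro _ ⟨J, hJ, rfl⟩
  exact hJ ▸ (le_abs_self _).trans (abs_naiP_sub_majP_le J)

theorem minDiff_naiP_majP_le (I : List ℕ) : minDiff naiP majP I.length ≤ naiP I - majP I := by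
  refine csInf_le ⟨-(I.length / 4), ?_⟩ ⟨I, rfl, rfl⟩
  rintro _ ⟨J, hJ, rfl⟩
  exact hJ ▸ neg_le_of_abs_le (abs_naiP_sub_majP_le J)

theorem majRun_replicate_append (a j q : ℕ) (R : List ℕ) :
    majRun (a, j) (List.replicate q a ++ R) = List.replicate q a ++ majRun (a, j + q) R := by
  induction q generalizing j with
  | zero => rfl
  | succ q ih =>
    rw [List.replicate_succ, List.cons_append, majRun, majStep_self, ih]
    simp [add_right_comm, add_assoc]

theorem majRun_of_length_le (a : ℕ) (R : List ℕ) (ha : a ∉ R) (j : ℕ) (hj : R.length ≤ j) :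
    majRun (a, j) R = List.replicate R.length a := by
  induction R generalizing j with
  | nil => rfl
  | cons x R ih =>
    rw [List.mem_cons, not_or] at ha
    rw [List.length_cons] at hj
    have hstep : majStep (a, j) x = (a, j - 1) := by
      simp [majStep, show j ≠ 0 by omega, Ne.symm ha.1]
    rw [majRun, hstep, ih ha.2 _ (by omega), List.length_cons, List.replicate_succ]

theorem exists_majRun_flatMap_pair_append (g h : ℕ → ℕ) (hgh : ∀ i, g i ≠ h i)
    (L R : List ℕ) (b : ℕ) :
    ∃ b', majRun (b, 0) (L.flatMap (fun i => [g i, h i]) ++ R)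
      = L.flatMap (fun i => [g i, g i]) ++ majRun (b', 0) R := by
  induction L generalizing b with
  | nil => exact ⟨b, rfl⟩
  | cons i L ih =>
    obtain ⟨b', hb'⟩ := ih (g i)
    refine ⟨b', ?_⟩
    simp [majRun, majStep, Ne.symm (hgh i), hb']

def zerosDistinct (q r : ℕ) : List ℕ := List.replicate q 0 ++ (List.range r).map (· + 1)

theorem length_zerosDistinct (q r : ℕ) : (zerosDistinct q r).length = q + r := by
  simp [zerosDistinct]

theorem count_zero_zerosDistinct (q r : ℕ) : (zerosDistinct q r).count 0 = q := by
  simp [zerosDistinct, List.count_eq_zero_of_not_mem]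

theorem count_succ_zerosDistinct (q : ℕ) {r i : ℕ} (hi : i < r) :
    (zerosDistinct q r).count (i + 1) = 1 := by
  rw [zerosDistinct, List.count_append, List.count_replicate, if_neg (by simp), zero_add]
  exact List.count_eq_one_of_mem (List.nodup_range.map (add_left_injective 1))
    (List.mem_map_of_mem (List.mem_range.2 hi))

theorem zerosDistinct_succ_right (q r : ℕ) :
    zerosDistinct q (r + 1) = zerosDistinct q r ++ [r + 1] := by
  simp [zerosDistinct, List.range_succ]

theorem naiP_zerosDistinct (q r : ℕ) :
    naiP (zerosDistinct q r) = (q ^ 2 + r) / (q + r) := by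
  have hzero : ∀ x ∈ List.replicate q 0, freq (zerosDistinct q r) x = q / (q + r) := by
    intro x hx
    rw [List.eq_of_mem_replicate hx, freq, count_zero_zerosDistinct, length_zerosDistinct]
    push_cast; rfl
  have hsucc : ∀ x ∈ (List.range r).map (· + 1), freq (zerosDistinct q r) x = 1 / (q + r) := by
    simp only [List.mem_map, List.mem_range]
    rintro _ ⟨i, hi, rfl⟩
    rw [freq, count_succ_zerosDistinct q hi, length_zerosDistinct]
    push_cast; rfl
  rw [naiP]
  nth_rewrite 2 [zerosDistinct]
  rw [profit, List.map_append, List.sum_append, ← profit, ← profit,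
    profit_of_forall_freq_eq _ _ _ hzero, profit_of_forall_freq_eq _ _ _ hsucc]
  simp only [List.length_replicate, List.length_map, List.length_range]
  ring

theorem majBuffers_zerosDistinct {q r : ℕ} (h : r ≤ q) :
    majBuffers (zerosDistinct q r) = List.replicate (q + r) 0 := by
  have hdistinct : 0 ∉ (List.range r).map (· + 1) := by simp
  rw [majBuffers_eq_majRun, zerosDistinct, majRun_replicate_append,
    majRun_of_length_le _ _ hdistinct _ (by simpa using h), ← List.replicate_add]
  simp

theorem majP_zerosDistinct {q r : ℕ} (h : r ≤ q) : majP (zerosDistinct q r) = q := by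
  rw [majP, majBuffers_zerosDistinct h, profit_of_forall_freq_eq _ _ (q / (q + r))]
  · rcases Nat.eq_zero_or_pos q with rfl | hq
    · simp
    · simp only [List.length_replicate]; push_cast; field_simp
  · intro x hx
    rw [List.eq_of_mem_replicate hx, freq, count_zero_zerosDistinct, length_zerosDistinct]
    push_cast; rfl

theorem cast_half_add_half (n : ℕ) : (((n / 2 : ℕ) : ℝ) + ((n + 1) / 2 : ℕ)) = n := by
  exact_mod_cast (show n / 2 + (n + 1) / 2 = n by omega)

theorem cast_half_le_cast_half_succ (n : ℕ) :
    ((n / 2 : ℕ) : ℝ) ≤ ((n + 1) / 2 : ℕ) ∧ (((n + 1) / 2 : ℕ) : ℝ) ≤ ((n / 2 : ℕ) : ℝ) + 1 :=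
  ⟨by gcongr; omega, by exact_mod_cast (show (n + 1) / 2 ≤ n / 2 + 1 by omega)⟩

theorem flatMap_range_perm (k : ℕ) :
    ((List.range k).flatMap fun i => [i + 1, 0]).Perm (zerosDistinct k k) := by
  induction k with
  | zero => rfl
  | succ k ih =>
    rw [List.range_succ, List.flatMap_append]
    refine (ih.append_right _).trans ?_
    rw [zerosDistinct_succ_right, zerosDistinct, zerosDistinct, List.replicate_succ]
    exact List.Perm.trans (by simp) (List.perm_append_singleton 0 _)

theorem Wseq_perm (n : ℕ) : (Wseq n).Perm (zerosDistinct (n / 2) ((n + 1) / 2)) := by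
  rw [Wseq]
  split_ifs with hn
  · rw [show (n + 1) / 2 = n / 2 + 1 by omega, zerosDistinct_succ_right]
    exact (flatMap_range_perm _).append_right _
  · rw [show (n + 1) / 2 = n / 2 by omega, List.append_nil]
    exact flatMap_range_perm _

theorem exists_eq_succ_of_mem_majBuffers_Wseq (n : ℕ) :
    ∀ x ∈ majBuffers (Wseq n), ∃ i < (n + 1) / 2, x = i + 1 := by
  obtain ⟨b, hb⟩ := exists_majRun_flatMap_pair_append (· + 1) (fun _ => 0) Nat.succ_ne_zero
    (List.range (n / 2)) (if n % 2 = 1 then [n / 2 + 1] else []) 0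
  rw [majBuffers_eq_majRun, Wseq, hb]
  intro x hx
  rcases List.mem_append.1 hx with hx | hx
  · obtain ⟨i, hi, hx⟩ := List.mem_flatMap.1 hx
    exact ⟨i, by simp at hi; omega, by simpa [eq_comm] using hx⟩
  · split_ifs at hx with hn
    · exact ⟨n / 2, by omega, by simpa [majRun, majStep] using hx⟩
    · simp [majRun] at hx

theorem majP_Wseq {n : ℕ} (hn : n ≠ 0) : majP (Wseq n) = 1 := by
  have hfreq : ∀ x ∈ majBuffers (Wseq n), freq (Wseq n) x = 1 / n := by
    intro x hx
    obtain ⟨i, hi, rfl⟩ := exists_eq_succ_of_mem_majBuffers_Wseq n x hx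
    rw [freq_eq_of_perm (Wseq_perm n), freq, count_succ_zerosDistinct _ hi, length_zerosDistinct,
      show n / 2 + (n + 1) / 2 = n by omega]
    push_cast; rfl
  rw [majP, profit_of_forall_freq_eq _ _ _ hfreq, majBuffers_eq_majRun, length_majRun,
    (Wseq_perm n).length_eq, length_zerosDistinct, show n / 2 + (n + 1) / 2 = n by omega]
  field_simp

theorem naiP_Wseq (n : ℕ) :
    naiP (Wseq n) = (((n / 2 : ℕ) : ℝ) ^ 2 + ((n + 1) / 2 : ℕ)) / n := by
  rw [naiP_eq_of_perm (Wseq_perm n), naiP_zerosDistinct, cast_half_add_half]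

theorem majP_sub_naiP_Iseq (n : ℕ) : majP (Iseq n) - naiP (Iseq n) =
    (((n + 1) / 2 : ℕ) : ℝ) - ((n / 2 : ℕ) : ℝ) / n - (((n + 1) / 2 : ℕ) : ℝ) ^ 2 / n := by
  rw [Iseq, ← zerosDistinct, majP_zerosDistinct (by omega), naiP_zerosDistinct,
    add_comm (((n + 1) / 2 : ℕ) : ℝ), cast_half_add_half]
  ring

theorem sub_one_le_maxDiff_naiP_majP {n : ℕ} (hn : n ≠ 0) :
    (n / 4 : ℝ) - 1 ≤ maxDiff naiP majP n := by
  have hlen : (Wseq n).length = n := by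
    rw [(Wseq_perm n).length_eq, length_zerosDistinct]; omega
  refine le_trans ?_ (hlen ▸ le_maxDiff_naiP_majP (Wseq n))
  rw [naiP_Wseq, majP_Wseq hn, sub_le_sub_iff_right, le_div_iff₀ (by positivity)]
  obtain ⟨hle, hle'⟩ := cast_half_le_cast_half_succ n
  have hsum := cast_half_add_half n
  set K : ℝ := ((n / 2 : ℕ) : ℝ)
  set Q : ℝ := (((n + 1) / 2 : ℕ) : ℝ)
  rw [← hsum]
  nlinarith [mul_nonneg (sub_nonneg.2 hle) (sub_nonneg.2 hle')]

theorem minDiff_naiP_majP_le_one_sub {n : ℕ} (hn : n ≠ 0) :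
    minDiff naiP majP n ≤ 1 - n / 4 := by
  have hlen : (Iseq n).length = n := by
    rw [Iseq, ← zerosDistinct, length_zerosDistinct]; omega
  refine (hlen ▸ minDiff_naiP_majP_le (Iseq n)).trans ?_
  rw [Iseq, ← zerosDistinct, naiP_zerosDistinct, majP_zerosDistinct (by omega),
    add_comm (((n + 1) / 2 : ℕ) : ℝ), cast_half_add_half, sub_le_iff_le_add,
    div_le_iff₀ (by positivity)]
  obtain ⟨hle, hle'⟩ := cast_half_le_cast_half_succ n
  have hsum := cast_half_add_half n
  set K : ℝ := ((n / 2 : ℕ) : ℝ)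
  set Q : ℝ := (((n + 1) / 2 : ℕ) : ℝ)
  rw [← hsum]
  nlinarith [mul_nonneg (sub_nonneg.2 hle) (sub_nonneg.2 hle')]

theorem tendsto_div_of_abs_sub_mul_le_one {v : ℕ → ℝ} {c : ℝ}
    (h : ∀ n, n ≠ 0 → |v n - c * n| ≤ 1) :
    Tendsto (fun n => v n / n) atTop (𝓝 c) := by
  rw [tendsto_iff_norm_sub_tendsto_zero]
  refine squeeze_zero' (Eventually.of_forall fun _ => norm_nonneg _) ?_
    tendsto_one_div_atTop_nhds_zero_nat
  filter_upwards [eventually_ne_atTop 0] with n hn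
  have hpos : (0 : ℝ) < n := by positivity
  rw [Real.norm_eq_abs, show v n / n - c = (v n - c * n) / n by field_simp, abs_div,
    abs_of_pos hpos]
  gcongr
  exact h n hn

/-- the relative interval of Nai versus Maj is [−1/4, 1/4];
on I_n = ⌈n/2⌉ copies of a_0 followed by ⌊n/2⌋ distinct items,
Maj(I_n) − Nai(I_n) = ⌈n/2⌉ − ⌊n/2⌋/n − ⌈n/2⌉²/n. -/
theorem stmt15 :
    Filter.limsup (fun n => maxDiff naiP majP n / (n : ℝ)) Filter.atTop = 1 / 4 ∧
    Filter.liminf (fun n => minDiff naiP majP n / (n : ℝ)) Filter.atTop = -(1 / 4) ∧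
    (∀ n : ℕ, majP (Iseq n) - naiP (Iseq n) =
      (((n + 1) / 2 : ℕ) : ℝ) - ((n / 2 : ℕ) : ℝ) / n -
        (((n + 1) / 2 : ℕ) : ℝ) ^ 2 / n) := by
  have hmax : Tendsto (fun n => maxDiff naiP majP n / (n : ℝ)) atTop (𝓝 (1 / 4)) :=
    tendsto_div_of_abs_sub_mul_le_one fun n hn => abs_le.2
      ⟨by linarith [sub_one_le_maxDiff_naiP_majP hn], by linarith [maxDiff_naiP_majP_le n]⟩
  have hmin : Tendsto (fun n => minDiff naiP majP n / (n : ℝ)) atTop (𝓝 (-(1 / 4))) :=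
    tendsto_div_of_abs_sub_mul_le_one fun n hn => abs_le.2
      ⟨by linarith [neg_le_minDiff_naiP_majP n], by linarith [minDiff_naiP_majP_le_one_sub hn]⟩
  exact ⟨hmax.limsup_eq, hmin.liminf_eq, majP_sub_naiP_Iseq⟩
end

section
/- For every sequence I, the worst permutation of I for Opt is the ordering D(I) of the items in nondecreasing order of frequency, and on D(I) Opt's profit equals Nai's profit; hence Opt_W(I) = Nai_W(I) = Nai(I), i.e., Nai and Opt are equivalent under relative worst order analysis. -/
open scoped BigOperators

/-!
In a valid schedule the buffer at time `i` holds an item that arrived at some time `j ≤ i`.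
When items arrive in nondecreasing order of frequency, as in `D(I)`, that item is no more
frequent than the one arriving at time `i`, so no schedule beats buffering every arriving
item: `Opt(D(I)) = Nai(D(I))`. Since `Nai` is order-independent and `Opt ≥ Nai` on every
sequence, `D(I)` is a worst permutation for `Opt`, and both worst values equal `Nai(I)`.
-/

theorem freq_le_one (I : List ℕ) (a : ℕ) : freq I a ≤ 1 :=
  div_le_one_of_le₀ (by exact_mod_cast I.count_le_length) (Nat.cast_nonneg _)

theorem freq_le_freq {I : List ℕ} {a b : ℕ} (h : I.count a ≤ I.count b) :
    freq I a ≤ freq I b :=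
  div_le_div_of_nonneg_right (by exact_mod_cast h) (Nat.cast_nonneg _)

theorem List.Perm.freq_eq {I J : List ℕ} (h : J.Perm I) : freq J = freq I := by
  funext a
  rw [freq, freq, h.count_eq, h.length_eq]

theorem List.Perm.naiP_eq {I J : List ℕ} (h : J.Perm I) : naiP J = naiP I := by
  rw [naiP, naiP, profit, profit, h.freq_eq]
  exact (h.map _).sum_eq

theorem ValidSched.refl (I : List ℕ) : ValidSched I I :=
  ⟨rfl, fun _ _ => Or.inl rfl⟩

theorem ValidSched.exists_le_getD_eq {I S : List ℕ} (hS : ValidSched I S) (i : ℕ)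
    (hi : i < S.length) : ∃ j ≤ i, S.getD i 0 = I.getD j 0 := by
  induction i using Nat.strong_induction_on with
  | _ i ih =>
    rcases hS.2 i hi with h | ⟨hpos, h⟩
    · exact ⟨i, le_rfl, h⟩
    · obtain ⟨j, hj, hSj⟩ := ih (i - 1) (by omega) (by omega)
      exact ⟨j, by omega, h.trans hSj⟩

theorem ValidSched.sum_map_le_of_pairwise {M : Type*} [AddMonoid M] [Preorder M]
    [AddLeftMono M] [AddRightMono M] {I S : List ℕ} (hS : ValidSched I S) {w : ℕ → M}
    (hw : I.Pairwise fun a b => w a ≤ w b) : (S.map w).sum ≤ (I.map w).sum := by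
  refine List.Forall₂.sum_le_sum (List.forall₂_iff_get.mpr ⟨by simp [hS.1], fun i hSi hIi => ?_⟩)
  simp only [List.length_map] at hSi hIi
  obtain ⟨j, hji, hj⟩ := hS.exists_le_getD_eq i hSi
  simp only [List.get_eq_getElem, List.getElem_map]
  rw [← List.getD_eq_getElem _ 0, hj, List.getD_eq_getElem _ _ (by omega)]
  rcases hji.lt_or_eq with hlt | rfl
  · exact List.pairwise_iff_getElem.mp hw j i _ _ hlt
  · exact le_rfl

theorem ValidSched.profit_le_length {I S : List ℕ} (hS : ValidSched I S) :
    profit I S ≤ I.length :=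
  (List.sum_le_sum fun a _ => freq_le_one I a).trans (by simp [hS.1])

theorem naiP_le_optP (I : List ℕ) : naiP I ≤ optP I :=
  le_csSup ⟨I.length, by rintro _ ⟨S, hS, rfl⟩; exact hS.profit_le_length⟩
    ⟨I, ValidSched.refl I, rfl⟩

theorem optP_eq_naiP_of_pairwise {I : List ℕ}
    (hI : I.Pairwise fun a b => I.count a ≤ I.count b) : optP I = naiP I :=
  IsGreatest.csSup_eq ⟨⟨I, ValidSched.refl I, rfl⟩, by
    rintro _ ⟨S, hS, rfl⟩
    exact hS.sum_map_le_of_pairwise (hI.imp freq_le_freq)⟩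

theorem worstP_eq_of_forall_perm_le {f : List ℕ → ℝ} {I J₀ : List ℕ} (h₀ : J₀.Perm I)
    (hle : ∀ J, J.Perm I → f J₀ ≤ f J) : worstP f I = f J₀ :=
  IsLeast.csInf_eq ⟨⟨J₀, h₀, rfl⟩, by rintro _ ⟨J, hJ, rfl⟩; exact hle J hJ⟩

theorem perm_Dsort (I : List ℕ) : (Dsort I).Perm I :=
  List.perm_insertionSort _ I

theorem pairwise_Dsort (I : List ℕ) :
    (Dsort I).Pairwise fun a b => (Dsort I).count a ≤ (Dsort I).count b := by
  have : Std.Total fun a b : ℕ => I.count a ≤ I.count b := ⟨fun a b => le_total _ _⟩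
  have : IsTrans ℕ fun a b : ℕ => I.count a ≤ I.count b := ⟨fun _ _ _ => le_trans⟩
  simp only [(perm_Dsort I).count_eq]
  exact List.pairwise_insertionSort _ I

theorem optP_Dsort (I : List ℕ) : optP (Dsort I) = naiP (Dsort I) :=
  optP_eq_naiP_of_pairwise (pairwise_Dsort I)

theorem worstP_naiP (I : List ℕ) : worstP naiP I = naiP I :=
  worstP_eq_of_forall_perm_le (List.Perm.refl I) fun _ hJ => hJ.naiP_eq.ge

theorem worstP_optP (I : List ℕ) : worstP optP I = optP (Dsort I) :=
  worstP_eq_of_forall_perm_le (perm_Dsort I) fun J hJ => by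
    rw [optP_Dsort, (perm_Dsort I).naiP_eq, ← hJ.naiP_eq]
    exact naiP_le_optP J

/-- the worst permutation of I for Opt is D(I), on which Opt's
profit equals Nai's; hence Opt_W(I) = Nai_W(I) = Nai(I): Nai and Opt are
equivalent under relative worst order analysis. -/
theorem stmt17 (I : List ℕ) :
    worstP optP I = optP (Dsort I) ∧
    optP (Dsort I) = naiP (Dsort I) ∧
    worstP optP I = worstP naiP I ∧
    worstP naiP I = naiP I := by
  refine ⟨worstP_optP I, optP_Dsort I, ?_, worstP_naiP I⟩
  rw [worstP_optP, optP_Dsort, worstP_naiP, (perm_Dsort I).naiP_eq]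
end
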